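/- With G, F, ∞⃗, x_R as above, the iteration of G on ∞⃗ reaches a fixed point in at most |S| steps, and at the fixed point, G^{|S|}(∞⃗)(s) = MinInitCons_M(s) = MinReach^+_{M,R}(s) for every state s, the minimal initial resource level with which a strategy can surely reach a reload state in at least one step. -/

import Mathlib

open scoped Classical NNReal ENat

noncomputable section

/-- A consumption Markov decision process. -/
structure CMDP (S A : Type) [Fintype S] where
  Δ : S → A → S → NNReal
  Δ_sum : ∀ s a, (∑ t, Δ s a t) = 1
  C : S → A → ℕ
  R : Set S
  cap : ℕ

namespace CMDP

variable {S A : Type} [Fintype S]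

/-- Strategies map histories (initial state, list of action/state steps) to actions. -/
abbrev Strat (S A : Type) : Type := S × List (A × S) → A

/-- Last state of a history. -/
def lastState (s : S) : List (A × S) → S
  | [] => s
  | (_, t) :: rest => lastState t rest

/-- The `i`-th state (0-indexed) of a history. -/
def stateAt (s : S) (steps : List (A × S)) (i : ℕ) : S :=
  (s :: steps.map Prod.snd).getD i s

variable (M : CMDP S A)

def Succ (s : S) (a : A) : Set S := {t | 0 < M.Δ s a t}

/-- Total consumption along a finite path. -/
def consAux : S → List (A × S) → ℕ
  | _, [] => 0
  | s, (a, t) :: rest => M.C s a + consAux t rest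

/-- One step of the energy-level update. -/
def levelStep (s : S) (a : A) (l : ℕ) : Option ℕ :=
  if s ∈ M.R then (if M.C s a ≤ M.cap then some (M.cap - M.C s a) else none)
  else (if M.C s a ≤ l then some (l - M.C s a) else none)

def energyFrom : Option ℕ → S → List (A × S) → Option ℕ
  | none, _, _ => none
  | some l, _, [] => some l
  | some l, s, (a, t) :: rest => energyFrom (M.levelStep s a l) t rest

/-- Energy level of a history initialized by `d` (`none` = ⊥, exhaustion). -/
def energy (d : ℕ) (s : S) (steps : List (A × S)) : Option ℕ :=
  M.energyFrom (some d) s steps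

/-- Validity of a finite path. -/
def ValidPath : S → List (A × S) → Prop
  | _, [] => True
  | s, (a, t) :: rest => t ∈ M.Succ s a ∧ ValidPath t rest

/-- First state of a run. -/
def runState (ρ : ℕ → S × A) (i : ℕ) : S := (ρ i).1

/-- The finite prefix of a run with `i` steps. -/
def prefixSteps (ρ : ℕ → S × A) (i : ℕ) : List (A × S) :=
  (List.range i).map fun k => ((ρ k).2, (ρ (k + 1)).1)

def IsRun (ρ : ℕ → S × A) : Prop := ∀ i, (ρ (i + 1)).1 ∈ M.Succ (ρ i).1 (ρ i).2

/-- A run is `d`-safe if the energy level of every finite prefix is defined. -/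
def DSafe (d : ℕ) (ρ : ℕ → S × A) : Prop :=
  ∀ i, M.energy d (runState ρ 0) (prefixSteps ρ i) ≠ none

/-- A run is compatible with a strategy. -/
def Compat (σ : Strat S A) (ρ : ℕ → S × A) : Prop :=
  M.IsRun ρ ∧ ∀ i, (ρ i).2 = σ (runState ρ 0, prefixSteps ρ i)

def CompatFrom (σ : Strat S A) (s : S) (ρ : ℕ → S × A) : Prop :=
  M.Compat σ ρ ∧ runState ρ 0 = s

/-- A strategy is `d`-safe in `s` if all compatible runs from `s` are `d`-safe. -/
def SafeStrat (σ : Strat S A) (d : ℕ) (s : S) : Prop :=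
  ∀ ρ, M.CompatFrom σ s ρ → M.DSafe d ρ

/-- A finite history compatible with a strategy. -/
def CompatHist (σ : Strat S A) (s : S) (steps : List (A × S)) : Prop :=
  M.ValidPath s steps ∧
    ∀ (i : ℕ) (h : i < steps.length), (steps.get ⟨i, h⟩).1 = σ (s, steps.take i)

def Memoryless (σ : Strat S A) : Prop :=
  ∀ h₁ h₂ : S × List (A × S), lastState h₁.1 h₁.2 = lastState h₂.1 h₂.2 → σ h₁ = σ h₂

/-- Cost of a run up to the first visit of `T` (∞ if `T` is never visited). -/
def reachCost (T : Set S) (ρ : ℕ → S × A) : ℕ∞ :=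
  ⨅ i ∈ {i : ℕ | runState ρ i ∈ T}, (M.consAux (runState ρ 0) (prefixSteps ρ i) : ℕ∞)

/-- `i`-step bounded reachability cost. -/
def reachCostBdd (T : Set S) (n : ℕ) (ρ : ℕ → S × A) : ℕ∞ :=
  ⨅ i ∈ {i : ℕ | i ≤ n ∧ runState ρ i ∈ T}, (M.consAux (runState ρ 0) (prefixSteps ρ i) : ℕ∞)

/-- Reachability cost requiring at least one step. -/
def reachCostPlus (T : Set S) (ρ : ℕ → S × A) : ℕ∞ :=
  ⨅ i ∈ {i : ℕ | 1 ≤ i ∧ runState ρ i ∈ T}, (M.consAux (runState ρ 0) (prefixSteps ρ i) : ℕ∞)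

def reachCostStrat (T : Set S) (σ : Strat S A) (s : S) : ℕ∞ :=
  ⨆ ρ ∈ {ρ | M.CompatFrom σ s ρ}, M.reachCost T ρ

def minReach (T : Set S) (s : S) : ℕ∞ :=
  ⨅ σ : Strat S A, M.reachCostStrat T σ s

def minReachBdd (T : Set S) (n : ℕ) (s : S) : ℕ∞ :=
  ⨅ σ : Strat S A, ⨆ ρ ∈ {ρ | M.CompatFrom σ s ρ}, M.reachCostBdd T n ρ

def minReachPlus (T : Set S) (s : S) : ℕ∞ :=
  ⨅ σ : Strat S A, ⨆ ρ ∈ {ρ | M.CompatFrom σ s ρ}, M.reachCostPlus T ρ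

/-- The Bellman operator for minimum cost reachability of `T`. -/
def bellman (T : Set S) (v : S → ℕ∞) : S → ℕ∞ := fun s =>
  if s ∈ T then 0 else ⨅ a : A, ((M.C s a : ℕ∞) + ⨆ t ∈ M.Succ s a, v t)

/-- The initial vector: `0` on `T`, `∞` elsewhere. -/
def xTvec (T : Set S) : S → ℕ∞ := fun s => if s ∈ T then 0 else ⊤

/-- Length of the longest simple path of `M`. -/
def longestSimple : ℕ :=
  sSup {n | ∃ (s : S) (steps : List (A × S)),
    M.ValidPath s steps ∧ (s :: steps.map Prod.snd).Nodup ∧ steps.length = n}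

/-- The augmented CMDP `M̃` with a fresh non-reload copy of every state. -/
def augment : CMDP (S ⊕ S) A where
  Δ := fun x a t =>
    Sum.elim (fun u => M.Δ (Sum.elim id id x) a u) (fun _ => (0 : NNReal)) t
  Δ_sum := by
    intro x a
    rw [Fintype.sum_sum_type]
    simp [M.Δ_sum (Sum.elim id id x) a]
  C := fun x a => M.C (Sum.elim id id x) a
  R := Sum.inl '' M.R
  cap := M.cap

/-- Truncation to `0` on reload states. -/
def strunc (x : S → ℕ∞) : S → ℕ∞ := fun s => if s ∈ M.R then 0 else x s

/-- The truncated Bellman-like operator `G`. -/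
def opG (v : S → ℕ∞) : S → ℕ∞ := fun s =>
  ⨅ a : A, ((M.C s a : ℕ∞) + ⨆ t ∈ M.Succ s a, M.strunc v t)

/-- Minimal `d ≤ cap` such that some strategy is `d`-safe in `s` (∞ if none). -/
def safeVec (s : S) : ℕ∞ :=
  ⨅ d ∈ {d : ℕ | d ≤ M.cap ∧ ∃ σ : Strat S A, M.SafeStrat σ d s}, (d : ℕ∞)

/-- An action safe in a state. -/
def SafeAction (s : S) (a : A) : Prop :=
  (s ∉ M.R ∧ ((M.C s a : ℕ∞) + ⨆ t ∈ M.Succ s a, M.safeVec t) ≤ M.safeVec s) ∨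
  (s ∈ M.R ∧ ((M.C s a : ℕ∞) + ⨆ t ∈ M.Succ s a, M.safeVec t) ≤ (M.cap : ℕ∞))

/-- A CMDP is decreasing if every (valid) simple cycle has positive consumption. -/
def Decreasing : Prop :=
  ∀ (s : S) (steps : List (A × S)), M.ValidPath s steps → steps ≠ [] →
    lastState s steps = s → (s :: (steps.map Prod.snd).dropLast).Nodup →
    0 < M.consAux s steps

/-- Selection according to a selection rule: the action of the largest
element of the domain below the counter value. -/
def selectFrom (φ : ℕ → Option A) (m : ℕ) (a₀ : A) : A :=
  (((List.range (m + 1)).reverse).findSome? φ).getD a₀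

/-- The finite counter strategy `Σ^y` induced by a counter selector. -/
def counterStrategy (sel : S → ℕ → Option A) (y : S → ℕ) (a₀ : A) : Strat S A :=
  fun h =>
    match M.energy (y h.1) h.1 h.2 with
    | some m => selectFrom (sel (lastState h.1 h.2)) m a₀
    | none => a₀

/-- The `SPR` value of an action. -/
def spr (s : S) (a : A) (x : S → ℕ∞) : ℕ∞ :=
  (M.C s a : ℕ∞) +
    ⨅ t ∈ M.Succ s a, max (x t) (⨆ t' ∈ {t' ∈ M.Succ s a | t' ≠ t}, M.safeVec t')

def opA (T : Set S) (x : S → ℕ∞) : S → ℕ∞ := fun s =>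
  if s ∈ T then M.safeVec s else ⨅ a : A, M.spr s a x

/-- Two-sided truncation. -/
def trunc2 (x : S → ℕ∞) : S → ℕ∞ := fun s =>
  if (M.cap : ℕ∞) < x s then ⊤ else if s ∈ M.R then 0 else x s

def opB (T : Set S) (x : S → ℕ∞) : S → ℕ∞ := M.trunc2 (M.opA T x)

def yTvec (T : Set S) : S → ℕ∞ := fun s => if s ∈ T then M.safeVec s else ⊤

def VisitsWithin (T : Set S) (i : ℕ) (ρ : ℕ → S × A) : Prop :=
  ∃ j ≤ i, runState ρ j ∈ T

def Visits (T : Set S) (ρ : ℕ → S × A) : Prop := ∃ j, runState ρ j ∈ T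

/-- Minimal `ℓ ≤ cap` s.t. some `ℓ`-safe strategy from `s` has a run visiting `T`
within the first `i` steps. -/
def safePRBdd (T : Set S) (i : ℕ) (s : S) : ℕ∞ :=
  ⨅ ℓ ∈ {ℓ : ℕ | ℓ ≤ M.cap ∧ ∃ σ : Strat S A, M.SafeStrat σ ℓ s ∧
      ∃ ρ, M.CompatFrom σ s ρ ∧ VisitsWithin T i ρ}, (ℓ : ℕ∞)

/-- Minimal `ℓ ≤ cap` s.t. some `ℓ`-safe strategy from `s` has a run visiting `T`. -/
def safePR (T : Set S) (s : S) : ℕ∞ :=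
  ⨅ ℓ ∈ {ℓ : ℕ | ℓ ≤ M.cap ∧ ∃ σ : Strat S A, M.SafeStrat σ ℓ s ∧
      ∃ ρ, M.CompatFrom σ s ρ ∧ Visits T ρ}, (ℓ : ℕ∞)

/-- Replace the set of reload states. -/
def setReload (R' : Set S) : CMDP S A := { M with R := R' }

/-- Probability of a finite continuation of a history under a strategy. -/
def pathProbAux (σ : Strat S A) : S × List (A × S) → List (A × S) → NNReal
  | _, [] => 1
  | h, (a, t) :: rest =>
      (if σ h = a then M.Δ (lastState h.1 h.2) a t else 0) *
        pathProbAux σ (h.1, h.2 ++ [(a, t)]) rest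

/-- Probability that the length-`n` prefix of a run from `s` under `σ`
satisfies the predicate `P`. -/
def probEvent [Fintype A] (σ : Strat S A) (s : S) (n : ℕ) (P : List (A × S) → Prop) : NNReal :=
  ∑ f : Fin n → A × S,
    if P (List.ofFn f) then M.pathProbAux σ (s, []) (List.ofFn f) else 0

/-- Number of visits of `T` along a finite path. -/
def visitCount (T : Set S) (s : S) (steps : List (A × S)) : ℕ :=
  (s :: steps.map Prod.snd).countP (fun x => decide (x ∈ T))

/-- `T` is visited infinitely often with probability one under `σ` from `s`. -/
def buchiAS [Fintype A] (σ : Strat S A) (s : S) (T : Set S) : Prop :=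
  ∀ k : ℕ,
    (⨆ n : ℕ, M.probEvent σ s n (fun steps => k ≤ visitCount T s steps)) = 1

/-- Minimal `d ≤ cap` s.t. some strategy is `d`-safe in `s` and visits `T`
infinitely often almost surely. -/
def safeBuchiVec [Fintype A] (T : Set S) (s : S) : ℕ∞ :=
  ⨅ d ∈ {d : ℕ | d ≤ M.cap ∧ ∃ σ : Strat S A, M.SafeStrat σ d s ∧ M.buchiAS σ s T}, (d : ℕ∞)

/-- Iterated memory update of a memory structure. -/
def updStar {Mem : Type} (upd : Mem → S → A → S → Mem) : Mem → S → List (A × S) → Mem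
  | m, _, [] => m
  | m, s, (a, t) :: rest => updStar upd (upd m s a t) t rest

/-- Finite-memory strategies: encodable by a finite memory structure. -/
def FinMemStrategy (σ : Strat S A) : Prop :=
  ∃ (Mem : Type) (_ : Finite Mem) (init : S → Mem) (upd : Mem → S → A → S → Mem)
    (nxt : Mem → S → A),
    ∀ h : S × List (A × S), σ h = nxt (updStar upd (init h.1) h.1 h.2) (lastState h.1 h.2)

/-- The joint run `α ⊙ ρ`. -/
def jointRun (s : S) (steps : List (A × S)) (ρ : ℕ → S × A) : ℕ → S × A :=
  fun i => if h : i < steps.length then (stateAt s steps i, (steps.get ⟨i, h⟩).1)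
           else ρ (i - steps.length)

end CMDP

/-!
Let `U = ⨅ n, G^n(∞⃗)` and say that `s` settles at the first `n` with `G^n(∞⃗)(s) = U s`.
Ordering states lexicographically by (value, settling time), an action attaining the minimum at
the settling step of `s` leads only to reload states or to smaller states; hence every state
settles within `|S|` steps and `U = G^{|S|}(∞⃗)` is a fixed point of `G`. Playing such actions,
the order decreases until a reload state is reached, having consumed at most `U s`. Conversely,
against any strategy, moving to the successor of largest truncated value keeps `U s` below the
consumption so far plus the truncated value of the current state, which vanishes in `R`.
-/

namespace Finset

variable {α β : Type*} [Fintype α] [LinearOrder β] (f : α → β)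

theorem card_filter_lt_lt_of_lt {x y : α} (h : f x < f y) :
    #{z | f z < f x} < #{z | f z < f y} := by
  refine card_lt_card ⟨fun z hz => ?_, fun hsub => ?_⟩
  · simp only [mem_filter, mem_univ, true_and] at hz ⊢
    exact hz.trans h
  · have hx := hsub (show x ∈ _ by simpa using h)
    simp at hx

theorem card_filter_lt_lt_card (x : α) : #{z | f z < f x} < Fintype.card α :=
  card_lt_univ_of_notMem (x := x) (by simp)

end Finset

namespace CMDP

open Finset

variable {S A : Type}

theorem lastState_append_singleton (s : S) (l : List (A × S)) (a : A) (t : S) :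
    lastState s (l ++ [(a, t)]) = t := by
  induction l generalizing s with
  | nil => rfl
  | cons p l ih => exact ih p.2

theorem prefixSteps_zero (ρ : ℕ → S × A) : prefixSteps ρ 0 = [] := rfl

theorem prefixSteps_succ (ρ : ℕ → S × A) (i : ℕ) :
    prefixSteps ρ (i + 1) = prefixSteps ρ i ++ [((ρ i).2, runState ρ (i + 1))] := by
  simp [prefixSteps, List.range_succ, runState]

theorem lastState_prefixSteps (ρ : ℕ → S × A) (i : ℕ) :
    lastState (runState ρ 0) (prefixSteps ρ i) = runState ρ i := by
  cases i with
  | zero => rfl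
  | succ i => rw [prefixSteps_succ, lastState_append_singleton]

variable [Fintype S] (M : CMDP S A)

theorem consAux_append_singleton (s : S) (l : List (A × S)) (a : A) (t : S) :
    M.consAux s (l ++ [(a, t)]) = M.consAux s l + M.C (lastState s l) a := by
  induction l generalizing s with
  | nil => simp [consAux, lastState]
  | cons p l ih => simp only [List.cons_append, consAux, ih, lastState]; omega

theorem consAux_prefixSteps_succ (ρ : ℕ → S × A) (i : ℕ) :
    M.consAux (runState ρ 0) (prefixSteps ρ (i + 1)) =
      M.consAux (runState ρ 0) (prefixSteps ρ i) + M.C (runState ρ i) (ρ i).2 := by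
  rw [prefixSteps_succ, consAux_append_singleton, lastState_prefixSteps]

theorem succ_nonempty (s : S) (a : A) : (M.Succ s a).Nonempty := by
  by_contra h
  have hzero : ∑ t, M.Δ s a t = 0 :=
    sum_eq_zero fun t _ => nonpos_iff_eq_zero.mp (not_lt.mp fun ht => h ⟨t, ht⟩)
  exact one_ne_zero ((M.Δ_sum s a).symm.trans hzero)

def histOf (σ : Strat S A) (next : S → A → S) (s : S) : ℕ → List (A × S)
  | 0 => []
  | j + 1 =>
    histOf σ next s j ++ [(σ (s, histOf σ next s j),
      next (lastState s (histOf σ next s j)) (σ (s, histOf σ next s j)))]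

theorem exists_compatFrom_of_next (σ : Strat S A) (s : S) {next : S → A → S}
    (hnext : ∀ u a, next u a ∈ M.Succ u a) :
    ∃ ρ, M.CompatFrom σ s ρ ∧ ∀ j, runState ρ (j + 1) = next (runState ρ j) (ρ j).2 := by
  let ρ : ℕ → S × A := fun j => (lastState s (histOf σ next s j), σ (s, histOf σ next s j))
  have hρ : ∀ j, runState ρ (j + 1) = next (runState ρ j) (ρ j).2 := fun j =>
    lastState_append_singleton _ _ _ _
  have hprefix : ∀ j, prefixSteps ρ j = histOf σ next s j := by
    intro j
    induction j with
    | zero => rfl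
    | succ j ih => rw [prefixSteps_succ, ih, hρ]; rfl
  refine ⟨ρ, ⟨⟨fun j => ?_, fun j => ?_⟩, rfl⟩, hρ⟩
  · show runState ρ (j + 1) ∈ _
    rw [hρ]
    exact hnext _ _
  · rw [hprefix]; rfl

def iterG (n : ℕ) : S → ℕ∞ := M.opG^[n] ⊤

def limG (s : S) : ℕ∞ := ⨅ n, M.iterG n s

theorem iterG_succ (n : ℕ) : M.iterG (n + 1) = M.opG (M.iterG n) :=
  Function.iterate_succ_apply' M.opG n ⊤

theorem strunc_mono : Monotone M.strunc := fun v w h s => by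
  unfold strunc; split_ifs
  exacts [le_rfl, h s]

theorem opG_mono : Monotone M.opG := fun _ _ h _ =>
  iInf_mono fun _ => add_le_add_right (iSup₂_mono fun t _ => M.strunc_mono h t) _

theorem iterG_antitone : Antitone M.iterG := by
  refine antitone_nat_of_succ_le fun n => ?_
  induction n with
  | zero => exact le_top
  | succ n ih => rw [M.iterG_succ (n + 1)]; exact (M.opG_mono ih).trans_eq (M.iterG_succ n).symm

theorem limG_le_iterG (n : ℕ) : M.limG ≤ M.iterG n := fun _ => iInf_le _ n

theorem exists_iterG_eq_limG (s : S) : ∃ n, M.iterG n s = M.limG s :=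
  ciInf_mem fun n => M.iterG n s

def settleTime (s : S) : ℕ := Nat.find (M.exists_iterG_eq_limG s)

theorem settleTime_le {n : ℕ} {s : S} (h : M.iterG n s = M.limG s) : M.settleTime s ≤ n :=
  Nat.find_min' _ h

theorem iterG_eq_limG_of_settleTime_le {n : ℕ} {s : S} (h : M.settleTime s ≤ n) :
    M.iterG n s = M.limG s :=
  le_antisymm ((M.iterG_antitone h s).trans (Nat.find_spec (M.exists_iterG_eq_limG s)).le)
    (M.limG_le_iterG n s)

theorem settleTime_eq_zero_iff {s : S} : M.settleTime s = 0 ↔ M.limG s = ⊤ :=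
  (Nat.find_eq_zero _).trans eq_comm

theorem settleTime_ne_zero {s : S} (hs : M.limG s ≠ ⊤) : M.settleTime s ≠ 0 :=
  mt M.settleTime_eq_zero_iff.mp hs

def AttainsLimG (s : S) (a : A) : Prop :=
  (M.C s a : ℕ∞) + ⨆ t ∈ M.Succ s a, M.strunc (M.iterG (M.settleTime s - 1)) t = M.limG s

theorem exists_attainsLimG {s : S} (hs : M.limG s ≠ ⊤) : ∃ a, M.AttainsLimG s a := by
  have hlim : M.opG (M.iterG (M.settleTime s - 1)) s = M.limG s := by
    rw [← M.iterG_succ, Nat.sub_one_add_one (M.settleTime_ne_zero hs),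
      M.iterG_eq_limG_of_settleTime_le le_rfl]
  have : Nonempty A := by
    by_contra hA
    rw [not_nonempty_iff] at hA
    exact hs (hlim.symm.trans (iInf_of_empty _))
  obtain ⟨a, ha⟩ := ciInf_mem fun a : A =>
    (M.C s a : ℕ∞) + ⨆ t ∈ M.Succ s a, M.strunc (M.iterG (M.settleTime s - 1)) t
  exact ⟨a, ha.trans hlim⟩

def settleKey (s : S) : ℕ∞ ×ₗ ℕ := toLex (M.limG s, M.settleTime s)

def keyRank (s : S) : ℕ := #{t | M.settleKey t < M.settleKey s}

theorem keyRank_lt_card (s : S) : M.keyRank s < Fintype.card S :=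
  card_filter_lt_lt_card M.settleKey s

variable {M} in
theorem AttainsLimG.add_strunc_le {s : S} {a : A} (ha : M.AttainsLimG s a) {t : S}
    (ht : t ∈ M.Succ s a) : (M.C s a : ℕ∞) + M.strunc M.limG t ≤ M.limG s :=
  calc (M.C s a : ℕ∞) + M.strunc M.limG t
      ≤ M.C s a + M.strunc (M.iterG (M.settleTime s - 1)) t :=
        add_le_add_right (M.strunc_mono (M.limG_le_iterG _) t) _
    _ ≤ M.limG s := ha ▸ add_le_add_right
        (le_iSup₂ (f := fun t _ => M.strunc (M.iterG (M.settleTime s - 1)) t) t ht) _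

variable {M} in
theorem AttainsLimG.keyRank_lt {s : S} {a : A} (ha : M.AttainsLimG s a) (hs : M.limG s ≠ ⊤)
    {t : S} (ht : t ∈ M.Succ s a) (htR : t ∉ M.R) : M.keyRank t < M.keyRank s := by
  refine card_filter_lt_lt_of_lt M.settleKey (Prod.Lex.lt_iff.mpr ?_)
  have hiter : M.iterG (M.settleTime s - 1) t ≤ M.limG s := by
    have h := le_iSup₂ (f := fun t _ => M.strunc (M.iterG (M.settleTime s - 1)) t) t ht
    simp only [strunc, if_neg htR] at h
    exact h.trans (ha ▸ le_add_self)
  rcases ((M.limG_le_iterG _ t).trans hiter).lt_or_eq with hlt | heq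
  · exact Or.inl hlt
  · refine Or.inr ⟨heq, lt_of_le_of_lt (M.settleTime_le (le_antisymm (heq ▸ hiter)
      (M.limG_le_iterG _ t))) ?_⟩
    exact Nat.sub_one_lt (M.settleTime_ne_zero hs)

/-- The non-reload successors of `s` under an attaining action have smaller keys, so by induction
they settle within `keyRank s` iterations; one more application of `G` then settles `s`. -/
theorem settleTime_le_keyRank_add_one (s : S) : M.settleTime s ≤ M.keyRank s + 1 := by
  induction hm : M.keyRank s using Nat.strong_induction_on generalizing s with
  | _ m ih =>
  by_cases hs : M.limG s = ⊤
  · rw [M.settleTime_eq_zero_iff.mpr hs]; exact Nat.zero_le _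
  obtain ⟨a, ha⟩ := M.exists_attainsLimG hs
  have hsucc : ∀ t ∈ M.Succ s a,
      M.strunc (M.iterG m) t ≤ M.strunc (M.iterG (M.settleTime s - 1)) t := by
    intro t ht
    by_cases htR : t ∈ M.R
    · simp only [strunc, if_pos htR, le_rfl]
    · have hlt : M.keyRank t < m := hm ▸ ha.keyRank_lt hs ht htR
      have hsettled : M.iterG m t = M.limG t :=
        M.iterG_eq_limG_of_settleTime_le ((ih _ hlt t rfl).trans hlt)
      simp only [strunc, if_neg htR, hsettled]
      exact M.limG_le_iterG _ t
  refine M.settleTime_le (le_antisymm ?_ (M.limG_le_iterG _ s))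
  calc M.iterG (m + 1) s
      ≤ (M.C s a : ℕ∞) + ⨆ t ∈ M.Succ s a, M.strunc (M.iterG m) t := by
        rw [M.iterG_succ]; exact iInf_le _ a
    _ ≤ M.limG s := ha ▸ add_le_add_right (iSup₂_mono hsucc) _

theorem settleTime_le_card (s : S) : M.settleTime s ≤ Fintype.card S :=
  (M.settleTime_le_keyRank_add_one s).trans (M.keyRank_lt_card s)

theorem iterG_card_eq_limG : M.iterG (Fintype.card S) = M.limG := funext fun s =>
  M.iterG_eq_limG_of_settleTime_le (M.settleTime_le_card s)

theorem iterG_card_add_one_eq_limG : M.iterG (Fintype.card S + 1) = M.limG := funext fun s =>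
  M.iterG_eq_limG_of_settleTime_le ((M.settleTime_le_card s).trans (Nat.le_succ _))

theorem opG_limG : M.opG M.limG = M.limG := by
  simpa only [M.iterG_card_add_one_eq_limG, M.iterG_card_eq_limG] using
    (M.iterG_succ (Fintype.card S)).symm

theorem limG_le_consAux_add_strunc {ρ : ℕ → S × A}
    (hstep : ∀ j, M.limG (runState ρ j) ≤
      M.C (runState ρ j) (ρ j).2 + M.strunc M.limG (runState ρ (j + 1))) (j : ℕ) :
    M.limG (runState ρ 0) ≤
      M.consAux (runState ρ 0) (prefixSteps ρ (j + 1)) + M.strunc M.limG (runState ρ (j + 1)) := by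
  induction j with
  | zero => simpa [consAux_prefixSteps_succ, prefixSteps_zero, consAux] using hstep 0
  | succ j ih =>
    rw [M.consAux_prefixSteps_succ ρ (j + 1), Nat.cast_add, add_assoc]
    refine ih.trans (add_le_add_right ?_ _)
    by_cases hR : runState ρ (j + 1) ∈ M.R
    · simp only [strunc, if_pos hR]
      exact zero_le
    · simpa only [strunc, if_neg hR] using hstep (j + 1)

theorem limG_le_reachCostPlus {ρ : ℕ → S × A}
    (hstep : ∀ j, M.limG (runState ρ j) ≤
      M.C (runState ρ j) (ρ j).2 + M.strunc M.limG (runState ρ (j + 1))) :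
    M.limG (runState ρ 0) ≤ M.reachCostPlus M.R ρ := by
  refine le_iInf₂ fun i ⟨hi, hiR⟩ => ?_
  obtain ⟨j, rfl⟩ := Nat.exists_eq_add_of_le' hi
  simpa [strunc, hiR] using M.limG_le_consAux_add_strunc hstep j

theorem exists_max_succ (v : S → ℕ∞) (u : S) (a : A) :
    ∃ t ∈ M.Succ u a, ∀ t' ∈ M.Succ u a, v t' ≤ v t :=
  Set.exists_max_image _ v (Set.toFinite _) (M.succ_nonempty u a)

theorem limG_le_iSup_reachCostPlus (σ : Strat S A) (s : S) :
    M.limG s ≤ ⨆ ρ ∈ {ρ | M.CompatFrom σ s ρ}, M.reachCostPlus M.R ρ := by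
  choose next hnext hworst using M.exists_max_succ (M.strunc M.limG)
  obtain ⟨ρ, hρ, hρnext⟩ := M.exists_compatFrom_of_next σ s hnext
  refine le_trans ?_ (le_iSup₂ (f := fun ρ _ => M.reachCostPlus M.R ρ) ρ hρ)
  rw [← hρ.2]
  refine M.limG_le_reachCostPlus fun j => ?_
  calc M.limG (runState ρ j) = M.opG M.limG (runState ρ j) := (congrFun M.opG_limG _).symm
    _ ≤ M.C (runState ρ j) (ρ j).2 + ⨆ t ∈ M.Succ (runState ρ j) (ρ j).2, M.strunc M.limG t :=
      iInf_le _ _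
    _ ≤ _ := by rw [hρnext]; exact add_le_add_right (iSup₂_le (hworst _ _)) _

theorem reachCostPlus_le_limG {ρ : ℕ → S × A} (hrun : M.IsRun ρ)
    (hact : ∀ j, M.limG (runState ρ j) ≠ ⊤ → M.AttainsLimG (runState ρ j) (ρ j).2)
    (h0 : M.limG (runState ρ 0) ≠ ⊤) : M.reachCostPlus M.R ρ ≤ M.limG (runState ρ 0) := by
  set c : ℕ → ℕ∞ := fun i => M.consAux (runState ρ 0) (prefixSteps ρ i)
  have hinv : ∀ j, (∃ i, 1 ≤ i ∧ runState ρ i ∈ M.R ∧ c i ≤ M.limG (runState ρ 0)) ∨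
      (c j + M.limG (runState ρ j) ≤ M.limG (runState ρ 0) ∧
        M.keyRank (runState ρ j) + j ≤ M.keyRank (runState ρ 0)) := by
    intro j
    induction j with
    | zero => exact Or.inr ⟨by simp [c, prefixSteps_zero, consAux], le_rfl⟩
    | succ j ih =>
      rcases ih with hhit | ⟨hcost, hrank⟩
      · exact Or.inl hhit
      have hfin : M.limG (runState ρ j) ≠ ⊤ := ne_top_of_le_ne_top h0 (le_add_self.trans hcost)
      have ha := hact j hfin
      have hc : c (j + 1) = c j + M.C (runState ρ j) (ρ j).2 := by
        simp [c, consAux_prefixSteps_succ]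
      have hsucc : runState ρ (j + 1) ∈ M.Succ (runState ρ j) (ρ j).2 := hrun j
      have hle := ha.add_strunc_le hsucc
      by_cases hR : runState ρ (j + 1) ∈ M.R
      · refine Or.inl ⟨j + 1, by omega, hR, ?_⟩
        rw [hc]
        exact (add_le_add_right (le_self_add.trans hle) _).trans hcost
      · simp only [strunc, if_neg hR] at hle
        refine Or.inr ⟨?_, ?_⟩
        · rw [hc, add_assoc]
          exact (add_le_add_right hle _).trans hcost
        · have := ha.keyRank_lt hfin hsucc hR
          omega
  obtain ⟨i, hi, hiR, hci⟩ := (hinv (M.keyRank (runState ρ 0) + 1)).resolve_right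
    fun h => absurd h.2 (by omega)
  exact (iInf₂_le i ⟨hi, hiR⟩).trans hci

theorem exists_strat_reachCostPlus_le {s : S} (hs : M.limG s ≠ ⊤) :
    ∃ σ : Strat S A, ∀ ρ, M.CompatFrom σ s ρ → M.reachCostPlus M.R ρ ≤ M.limG s := by
  choose act hact using fun u (hu : M.limG u ≠ ⊤) => M.exists_attainsLimG hu
  let σ : Strat S A := fun h =>
    if hh : M.limG (lastState h.1 h.2) ≠ ⊤ then act _ hh else act s hs
  have hσ : ∀ h : S × List (A × S), M.limG (lastState h.1 h.2) ≠ ⊤ →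
      M.AttainsLimG (lastState h.1 h.2) (σ h) := fun h hh => by
    simp only [σ, dif_pos hh]
    exact hact _ hh
  refine ⟨σ, ?_⟩
  rintro ρ ⟨⟨hrun, hcompat⟩, rfl⟩
  refine M.reachCostPlus_le_limG hrun (fun j => ?_) hs
  simpa only [lastState_prefixSteps, ← hcompat j] using hσ (runState ρ 0, prefixSteps ρ j)

theorem minReachPlus_eq_limG (s : S) : M.minReachPlus M.R s = M.limG s := by
  refine le_antisymm ?_ (le_iInf fun σ => M.limG_le_iSup_reachCostPlus σ s)
  by_cases hs : M.limG s = ⊤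
  · exact hs ▸ le_top
  obtain ⟨σ, hσ⟩ := M.exists_strat_reachCostPlus_le hs
  exact (iInf_le _ σ).trans (iSup₂_le hσ)

end CMDP

open CMDP in
/-- Iterating `G` reaches a fixed point within `|S|` steps, and the fixed point is
`MinInitCons = MinReach⁺ to the reload states`. -/
theorem opG_fixed_point_eq_minInitCons {S A : Type} [Fintype S] (M : CMDP S A) :
    ((M.opG)^[Fintype.card S + 1] (⊤ : S → ℕ∞) =
        (M.opG)^[Fintype.card S] (⊤ : S → ℕ∞)) ∧
      ∀ s : S, (M.opG)^[Fintype.card S] (⊤ : S → ℕ∞) s = M.minReachPlus M.R s :=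
  ⟨M.iterG_card_add_one_eq_limG.trans M.iterG_card_eq_limG.symm,
    fun s => (congrFun M.iterG_card_eq_limG s).trans (M.minReachPlus_eq_limG s).symm⟩
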